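/- arXiv:math/0508350 — 2 statements merged into one kernel-verified Lean document; each statement's English description precedes it below -/
import Mathlib

section
/- Let p : ℝⁿ → ℝ be a homogeneous polynomial of degree d ≥ 1, let D ⊆ ℝⁿ be a homogeneous domain (x ∈ D implies γx ∈ D for every real scalar γ), let 0 ≤ η, and let f : ℝⁿ → ℝ satisfy f(αx) = α^d f(x) for all α > 0 and x ∈ ℝⁿ. If |f(x) − p(x)| ≤ η · max(|p(x)|, 1) for all x ∈ D (mixed absolute/relative accuracy), then |f(x) − p(x)| ≤ η · |p(x)| for all x ∈ D (relative accuracy). -/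
lemma aux_eval_smul {σ : Type*} {d : ℕ} (p : MvPolynomial σ ℝ) (hp : p.IsHomogeneous d)
    (c : ℝ) (x : σ → ℝ) :
    MvPolynomial.eval (c • x) p = c ^ d * MvPolynomial.eval x p := by
  rw [MvPolynomial.eval_eq, MvPolynomial.eval_eq, Finset.mul_sum]
  refine Finset.sum_congr rfl fun m hm => ?_
  have hdeg : ∑ i ∈ m.support, m i = d := by
    have := hp (MvPolynomial.mem_support_iff.mp hm)
    simpa [Finsupp.weight_apply, Finsupp.sum] using this
  calc MvPolynomial.coeff m p * ∏ i ∈ m.support, (c • x) i ^ m i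
      = MvPolynomial.coeff m p * ∏ i ∈ m.support, (c ^ m i * x i ^ m i) := by
        simp [mul_pow]
    _ = c ^ d * (MvPolynomial.coeff m p * ∏ i ∈ m.support, x i ^ m i) := by
        rw [Finset.prod_mul_distrib, Finset.prod_pow_eq_pow_sum, hdeg]
        ring

/-- For a homogeneous polynomial `p` of degree `d ≥ 1` on a homogeneous domain,
evaluated by a positively homogeneous function `f` of the same degree, mixed
absolute/relative accuracy `η` implies relative accuracy `η`. -/
theorem stmt_14 (n d : ℕ) (hd : 1 ≤ d)
    (p : MvPolynomial (Fin n) ℝ) (hp : p.IsHomogeneous d)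
    (D : Set (Fin n → ℝ)) (hD : ∀ x ∈ D, ∀ γ : ℝ, γ • x ∈ D)
    (η : ℝ) (hη : 0 ≤ η)
    (f : (Fin n → ℝ) → ℝ)
    (hf : ∀ α : ℝ, 0 < α → ∀ x : Fin n → ℝ, f (α • x) = α ^ d * f x)
    (h : ∀ x ∈ D, |f x - MvPolynomial.eval x p| ≤ η * max |MvPolynomial.eval x p| 1) :
    ∀ x ∈ D, |f x - MvPolynomial.eval x p| ≤ η * |MvPolynomial.eval x p| := by
  intro x hx
  -- key scaled estimate
  have key : ∀ α : ℝ, 0 < α →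
      α ^ d * |f x - MvPolynomial.eval x p| ≤
        η * max (α ^ d * |MvPolynomial.eval x p|) 1 := by
    intro α hα
    have hmem : α • x ∈ D := hD x hx α
    have := h (α • x) hmem
    rw [hf α hα x, aux_eval_smul p hp α x] at this
    have hαd : (0 : ℝ) < α ^ d := pow_pos hα d
    calc α ^ d * |f x - MvPolynomial.eval x p|
        = |α ^ d * f x - α ^ d * MvPolynomial.eval x p| := by
          rw [← mul_sub, abs_mul, abs_of_pos hαd]
      _ ≤ η * max |α ^ d * MvPolynomial.eval x p| 1 := this
      _ = η * max (α ^ d * |MvPolynomial.eval x p|) 1 := by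
          rw [abs_mul, abs_of_pos hαd]
  set P := |MvPolynomial.eval x p| with hP
  have hP0 : 0 ≤ P := abs_nonneg _
  by_cases hz : P = 0
  · -- p x = 0 : must show |f x - p x| ≤ 0, i.e. it is 0
    rw [hz, mul_zero]
    by_contra hne
    push_neg at hne
    set F := |f x - MvPolynomial.eval x p| with hF
    have hF0 : 0 < F := lt_of_not_ge (by simpa using hne) |>.trans_le le_rfl
    -- choose α large
    set α : ℝ := max 1 (η / F + 1) with hαdef
    have hα1 : (1 : ℝ) ≤ α := le_max_left _ _
    have hαpos : 0 < α := lt_of_lt_of_le one_pos hα1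
    have hk := key α hαpos
    rw [hz, mul_zero] at hk
    have hmax : max (0 : ℝ) 1 = 1 := by norm_num
    rw [hmax, mul_one] at hk
    -- α^d ≥ α > η / F
    have hαd : α ≤ α ^ d := le_self_pow₀ (by linarith) (by omega)
    have hgt : η / F < α := lt_of_lt_of_le (by linarith [le_max_right (1:ℝ) (η / F + 1)]) le_rfl
    have hgt' : η / F < α ^ d := lt_of_lt_of_le hgt hαd
    have : η < α ^ d * F := by
      rw [div_lt_iff₀ hF0] at hgt'
      linarith
    linarith
  · -- p x ≠ 0
    have hPpos : 0 < P := lt_of_le_of_ne hP0 (Ne.symm hz)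
    set β : ℝ := max 1 (1 / P) with hβdef
    have hβ1 : (1 : ℝ) ≤ β := le_max_left _ _
    have hβpos : 0 < β := lt_of_lt_of_le one_pos hβ1
    have hβd : β ≤ β ^ d := le_self_pow₀ (by linarith) (by omega)
    have h1 : 1 ≤ β ^ d * P := by
      have : 1 / P ≤ β := le_max_right _ _
      have := (div_le_iff₀ hPpos).mp this
      nlinarith
    have hk := key β hβpos
    rw [max_eq_left h1] at hk
    have hβdpos : (0 : ℝ) < β ^ d := pow_pos hβpos d
    have : β ^ d * |f x - MvPolynomial.eval x p| ≤ β ^ d * (η * P) := by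
      calc β ^ d * |f x - MvPolynomial.eval x p| ≤ η * (β ^ d * P) := hk
        _ = β ^ d * (η * P) := by ring
    exact le_of_mul_le_mul_left this hβdpos
end

section
/- Let n ≥ 1, let q₁, …, q_m ∈ ℂ[x₁,…,xₙ] be nonconstant irreducible polynomials, and let p ∈ ℂ[x₁,…,xₙ] be a nonconstant polynomial whose zero set V(p) is a finite union of finite intersections of sets each of which is an allowable hyperplane Z_i, S_{ij}, D_{ij} or one of the hypersurfaces V(q_l). Then V(p) is a simple finite union of such sets: V(p) = W₁ ∪ ⋯ ∪ W_s, where each W_r is itself one of the hyperplanes Z_i, S_{ij}, D_{ij} or one of the hypersurfaces V(q_l) (no nontrivial intersections occur). -/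
/-!
Each intersection of basic sets in a row lies in a single basic set `V(hᵢ)` with `hᵢ`
irreducible, so `V(p) ⊆ V(∏ hᵢ)`. By the Nullstellensatz every prime factor `f` of `p` then
divides `∏ hᵢ`, hence some `hᵢ`, and irreducibility of `hᵢ` forces `V(f) = V(hᵢ)`. As `V(p)` is
the union of the `V(f)`, it is a union of basic sets.
-/

open MvPolynomial

/-- A basic set for black-box arithmetic: an allowable hyperplane `{x_i = 0}`,
`{x_i + x_j = 0}`, `{x_i - x_j = 0}`, or the zero set of one of the black-box
polynomials `q l`. -/
def IsBasicQSet (n m : ℕ) (q : Fin m → MvPolynomial (Fin n) ℂ)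
    (W : Set (Fin n → ℂ)) : Prop :=
  (∃ i : Fin n, W = {x | x i = 0}) ∨
  (∃ i j : Fin n, i ≠ j ∧ W = {x | x i + x j = 0}) ∨
  (∃ i j : Fin n, i ≠ j ∧ W = {x | x i - x j = 0}) ∨
  (∃ l : Fin m, W = {x | MvPolynomial.eval x (q l) = 0})

namespace MvPolynomial

variable {σ k : Type*}

section CommRing

variable [CommRing k]

def zeroSet (p : MvPolynomial σ k) : Set (σ → k) := {x | eval x p = 0}

@[simp]
theorem mem_zeroSet {p : MvPolynomial σ k} {x : σ → k} : x ∈ zeroSet p ↔ eval x p = 0 :=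
  Iff.rfl

theorem zeroSet_eq_of_dvd_of_irreducible {f h : MvPolynomial σ k} (hh : Irreducible h)
    (hf : ¬IsUnit f) (hfh : f ∣ h) : zeroSet f = zeroSet h := by
  obtain ⟨c, rfl⟩ := hfh
  have hc : IsUnit c := (hh.isUnit_or_isUnit rfl).resolve_left hf
  ext x
  simp [(hc.map (eval x)).mul_left_eq_zero]

theorem zeroSet_subset_zeroSet_of_dvd {f g : MvPolynomial σ k} (hfg : f ∣ g) :
    zeroSet f ⊆ zeroSet g := by
  obtain ⟨c, rfl⟩ := hfg
  intro x hx
  simp_all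

variable [IsDomain k]

theorem irreducible_X_add_C_mul_X {i j : σ} (hij : i ≠ j) (c : k) :
    Irreducible (X i + C c * X j : MvPolynomial σ k) := by
  classical
  simpa [add_comm] using
    irreducible_mul_X_add 1 (C c * X j) i one_ne_zero (by simp)
      (fun hi => hij (by simpa using vars_mul _ _ hi)) isRelPrime_one_left

theorem zeroSet_prod {ι : Type*} [Fintype ι] (h : ι → MvPolynomial σ k) :
    zeroSet (∏ i, h i) = ⋃ i, zeroSet (h i) := by
  ext x
  simp [map_prod, Finset.prod_eq_zero_iff]

end CommRing

section Field

variable [Field k]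

theorem exists_eval_ne_zero [Infinite k] {p : MvPolynomial σ k} (hp : p ≠ 0) :
    ∃ x, eval x p ≠ 0 := by
  by_contra! h
  exact hp (funext fun x => by simp [h x])

theorem nonempty_of_iInter_subset_zeroSet [Infinite k] {ι : Sort*} {p : MvPolynomial σ k}
    (hp : p ≠ 0) {A : ι → Set (σ → k)} (hA : ⋂ i, A i ⊆ zeroSet p) : Nonempty ι := by
  by_contra hι
  rw [not_nonempty_iff] at hι
  obtain ⟨x, hx⟩ := exists_eval_ne_zero hp
  exact hx (hA (Set.mem_iInter_of_mem isEmptyElim))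

theorem zeroSet_eq_iUnion_factors {p : MvPolynomial σ k} (hp : p ≠ 0) :
    zeroSet p = ⋃ f ∈ UniqueFactorizationMonoid.factors p, zeroSet f := by
  ext x
  have := ((UniqueFactorizationMonoid.factors_prod hp).map (eval x)).eq_zero_iff
  simp [← this, map_multiset_prod, Multiset.prod_eq_zero_iff]

variable [IsAlgClosed k] [Finite σ]

theorem dvd_of_zeroSet_subset {f g : MvPolynomial σ k} (hf : Prime f)
    (hfg : zeroSet f ⊆ zeroSet g) : f ∣ g := by
  have hg : g ∈ vanishingIdeal k (zeroLocus k (Ideal.span {f})) := fun x hx =>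
    hfg (hx f (Ideal.mem_span_singleton_self f))
  rwa [vanishingIdeal_zeroLocus_eq_radical,
    ((Ideal.span_singleton_prime hf.ne_zero).mpr hf).radical,
    Ideal.mem_span_singleton] at hg

theorem exists_zeroSet_eq_of_mem_factors {ι : Type*} [Fintype ι] {h : ι → MvPolynomial σ k}
    (hh : ∀ i, Irreducible (h i)) {p : MvPolynomial σ k} (hp : zeroSet p ⊆ ⋃ i, zeroSet (h i))
    {f : MvPolynomial σ k} (hf : f ∈ UniqueFactorizationMonoid.factors p) :
    ∃ i, zeroSet f = zeroSet (h i) := by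
  have hf_prime := UniqueFactorizationMonoid.prime_of_factor f hf
  have hf_sub : zeroSet f ⊆ zeroSet (∏ i, h i) := by
    rw [zeroSet_prod]
    exact (zeroSet_subset_zeroSet_of_dvd (UniqueFactorizationMonoid.dvd_of_mem_factors hf)).trans hp
  have hf_dvd : f ∣ ∏ i, h i := dvd_of_zeroSet_subset hf_prime hf_sub
  obtain ⟨i, -, hi⟩ := hf_prime.exists_mem_finset_dvd hf_dvd
  exact ⟨i, zeroSet_eq_of_dvd_of_irreducible (hh i) hf_prime.not_isUnit hi⟩

end Field

end MvPolynomial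

theorem IsBasicQSet.exists_irreducible {n m : ℕ} {q : Fin m → MvPolynomial (Fin n) ℂ}
    (hq : ∀ l, Irreducible (q l)) {W : Set (Fin n → ℂ)} (hW : IsBasicQSet n m q W) :
    ∃ h, Irreducible h ∧ W = zeroSet h := by
  rcases hW with ⟨i, rfl⟩ | ⟨i, j, hij, rfl⟩ | ⟨i, j, hij, rfl⟩ | ⟨l, rfl⟩
  · exact ⟨X i, X_prime.irreducible, by ext; simp⟩
  · exact ⟨X i + C 1 * X j, irreducible_X_add_C_mul_X hij 1, by ext; simp⟩
  · exact ⟨X i + C (-1) * X j, irreducible_X_add_C_mul_X hij (-1), by ext; simp [sub_eq_add_neg]⟩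
  · exact ⟨q l, hq l, rfl⟩

theorem stmt_18_general (n m : ℕ)
    (q : Fin m → MvPolynomial (Fin n) ℂ)
    (hq : ∀ l, 0 < (q l).totalDegree ∧ Irreducible (q l))
    (p : MvPolynomial (Fin n) ℂ) (hp : 0 < p.totalDegree)
    (K : ℕ) (r : Fin K → ℕ) (H : (i : Fin K) → Fin (r i) → Set (Fin n → ℂ))
    (hH : ∀ i j, IsBasicQSet n m q (H i j))
    (hV : {x | MvPolynomial.eval x p = 0} = ⋃ i, ⋂ j, H i j) :
    ∃ (s : ℕ) (W : Fin s → Set (Fin n → ℂ)),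
      (∀ t, IsBasicQSet n m q (W t)) ∧
      {x | MvPolynomial.eval x p = 0} = ⋃ t, W t := by
  classical
  have hp0 : p ≠ 0 := by rintro rfl; simp at hp
  have hV' : zeroSet p = ⋃ i, ⋂ j, H i j := hV
  have hrow (i : Fin K) : ∃ j, ∃ h, Irreducible h ∧ H i j = zeroSet h := by
    obtain ⟨j⟩ := nonempty_of_iInter_subset_zeroSet hp0 (hV' ▸ Set.subset_iUnion _ i)
    exact ⟨j, (hH i j).exists_irreducible fun l => (hq l).2⟩
  choose j h hh hHj using hrow
  have hcover : zeroSet p ⊆ ⋃ i, zeroSet (h i) :=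
    hV' ▸ Set.iUnion_mono fun i => (hHj i).subst (Set.iInter_subset _ (j i))
  let F := (UniqueFactorizationMonoid.factors p).toFinset
  let e : Fin F.card ≃ F := F.equivFin.symm
  refine ⟨F.card, fun t => zeroSet (e t : MvPolynomial (Fin n) ℂ), fun t => ?_, ?_⟩
  · obtain ⟨i, hi⟩ := exists_zeroSet_eq_of_mem_factors hh hcover
      (Multiset.mem_toFinset.mp (e t).2)
    change IsBasicQSet n m q (zeroSet _)
    rw [hi, ← hHj i]
    exact hH i (j i)
  · change zeroSet p = _
    rw [e.surjective.iUnion_comp (fun f : F => zeroSet (f : MvPolynomial (Fin n) ℂ)),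
      Set.iUnion_subtype, zeroSet_eq_iUnion_factors hp0]
    simp only [F, Multiset.mem_toFinset]

/-- If the variety of a nonconstant complex polynomial `p` is a finite union of
finite intersections of allowable hyperplanes and hypersurfaces `V(q_l)` (the `q_l` being
nonconstant irreducible), then it is a simple finite union of such sets. -/
theorem stmt_18 (n m : ℕ) (hn : 1 ≤ n)
    (q : Fin m → MvPolynomial (Fin n) ℂ)
    (hq : ∀ l, 0 < (q l).totalDegree ∧ Irreducible (q l))
    (p : MvPolynomial (Fin n) ℂ) (hp : 0 < p.totalDegree)
    (K : ℕ) (r : Fin K → ℕ) (H : (i : Fin K) → Fin (r i) → Set (Fin n → ℂ))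
    (hH : ∀ i j, IsBasicQSet n m q (H i j))
    (hV : {x | MvPolynomial.eval x p = 0} = ⋃ i, ⋂ j, H i j) :
    ∃ (s : ℕ) (W : Fin s → Set (Fin n → ℂ)),
      (∀ t, IsBasicQSet n m q (W t)) ∧
      {x | MvPolynomial.eval x p = 0} = ⋃ t, W t :=
  stmt_18_general n m q hq p hp K r H hH hV
end
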